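/- If x, y are positive reals, w is an even positive integer, and the two-coloured quantum integers satisfy p^x_{w+1}(x,y) = p^y_{w+1}(x,y) = 1 with p^x_n(x,y) > 0 and p^y_n(x,y) > 0 for 1 ≤ n ≤ w, then x = y. (Hence every 2-periodic positive real frieze of type A_w with w even is constant.) -/

import Mathlib

/-!
The two colours differ only by a scalar: `p^x_n = p^y_n` for even `n` and
`y p^x_n = x p^y_n` for odd `n`, by a joint induction through the recurrence.
For even `w` the index `w + 1` is odd, so `p^x_{w+1} = p^y_{w+1} = 1` forces `y = x`.
-/

/-- The pair of two-coloured quantum integers `tc x y n = (p^x_n, p^y_n)`. -/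
def tc (x y : ℝ) : ℕ → ℝ × ℝ
  | 0 => (1, 1)
  | 1 => (x, y)
  | n + 2 => (x * (tc x y (n + 1)).2 - (tc x y n).1,
              y * (tc x y (n + 1)).1 - (tc x y n).2)

def px (x y : ℝ) (n : ℕ) : ℝ := (tc x y n).1
def py (x y : ℝ) (n : ℕ) : ℝ := (tc x y n).2

section

variable (x y : ℝ)

lemma px_add_two (n : ℕ) : px x y (n + 2) = x * py x y (n + 1) - px x y n := rfl

lemma py_add_two (n : ℕ) : py x y (n + 2) = y * px x y (n + 1) - py x y n := rfl

lemma px_eq_py_even_and_mul_eq_odd (k : ℕ) :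
    px x y (2 * k) = py x y (2 * k) ∧ y * px x y (2 * k + 1) = x * py x y (2 * k + 1) := by
  induction k with
  | zero => exact ⟨rfl, mul_comm y x⟩
  | succ k ih =>
    obtain ⟨hEven, hOdd⟩ := ih
    have hEven' : px x y (2 * k + 2) = py x y (2 * k + 2) := by
      rw [px_add_two, py_add_two]
      linarith
    have hpx := px_add_two x y (2 * k + 1)
    have hpy := py_add_two x y (2 * k + 1)
    simp only [add_assoc, Nat.reduceAdd] at hpx hpy
    refine ⟨hEven', ?_⟩
    rw [show 2 * (k + 1) + 1 = 2 * k + 3 by ring, hpx, hpy]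
    linear_combination -x * y * hEven' - hOdd

lemma mul_px_eq_mul_py_of_odd {n : ℕ} (hn : Odd n) : y * px x y n = x * py x y n := by
  obtain ⟨k, rfl⟩ := hn
  exact (px_eq_py_even_and_mul_eq_odd x y k).2

end

theorem typeA_even_constant_general (w : ℕ) (hw : Even w)
    (x y : ℝ)
    (h1 : px x y (w + 1) = 1) (h2 : py x y (w + 1) = 1) :
    x = y := by
  have hscale := mul_px_eq_mul_py_of_odd x y hw.add_one
  rw [h1, h2] at hscale
  linarith

/-- If `w` is an even positive integer and `x, y > 0` give a 2-periodic positive frieze of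
type `A_w`, i.e. `p^x_{w+1} = p^y_{w+1} = 1` with all intermediate values positive,
then `x = y` (the frieze is constant). -/
theorem typeA_even_constant (w : ℕ) (hw : Even w) (hw1 : 0 < w)
    (x y : ℝ) (hx : 0 < x) (hy : 0 < y)
    (h1 : px x y (w + 1) = 1) (h2 : py x y (w + 1) = 1)
    (hpos : ∀ n, 1 ≤ n → n ≤ w → 0 < px x y n ∧ 0 < py x y n) :
    x = y :=
  typeA_even_constant_general w hw x y h1 h2
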